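/- Let d ≥ 3, let U ⊆ ℝ^d be open, and let σ₀ be a smooth defining function for Σ ⊆ U. Then there exist an open set V with Σ ⊆ V ⊆ U, a smooth defining function σ for Σ on V, and a smooth function B on V such that S(σ) = 1 + σ^d · B on V. (Flat-background case of the theorem that every conformally embedded hypersurface admits a defining density solving the singular Yamabe equation up to an order-d obstruction term.) -/

import Mathlib

/-!
Dividing `σ₀` by `‖∇σ₀‖` gives a defining function with `‖∇σ‖ = 1` along `Σ`, hence
`S(σ) = 1 + σ B`. If `S(σ) = 1 + σ^k f` with `1 ≤ k < d`, expanding the S-curvature of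
`σ' = σ + c σ^(k+1) f` gives `S(σ') = 1 + (1 + 2c(k+1)(1 - k/d)) σ^k f + σ^(k+1) R`,
and `c = -d / (2(k+1)(d-k))` removes the `σ^k` term. Since `σ' = σ (1 + c σ^k f)` and the
factor is `1` on `Σ`, near `Σ` the function `σ'` is again a defining function and
`σ^(k+1) R` is `σ'^(k+1)` times a smooth function. Iterating from `k = 1` reaches `k = d`.
-/

open RealInnerProductSpace

/-- The flat Euclidean Laplacian of `σ : ℝ^d → ℝ`. -/
noncomputable def flatLaplacian {d : ℕ} (σ : EuclideanSpace ℝ (Fin d) → ℝ)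
    (x : EuclideanSpace ℝ (Fin d)) : ℝ :=
  ∑ i : Fin d, fderiv ℝ (fun y => fderiv ℝ σ y (EuclideanSpace.single i 1)) x
    (EuclideanSpace.single i 1)

/-- The flat S-curvature `S(σ) = ‖∇σ‖² − (2σ/d)Δσ`. -/
noncomputable def Scurv {d : ℕ} (σ : EuclideanSpace ℝ (Fin d) → ℝ)
    (x : EuclideanSpace ℝ (Fin d)) : ℝ :=
  ‖gradient σ x‖ ^ 2 - (2 * σ x / d) * flatLaplacian σ x

/-- `σ` is a smooth defining function for `Z` on `U`: it is smooth on `U`, `Z` is its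
zero set in `U`, and its differential is nonvanishing along `Z`. -/
def IsDefiningFn {d : ℕ} (σ : EuclideanSpace ℝ (Fin d) → ℝ)
    (U Z : Set (EuclideanSpace ℝ (Fin d))) : Prop :=
  ContDiffOn ℝ (⊤ : ℕ∞) σ U ∧ Z = {x ∈ U | σ x = 0} ∧ ∀ x ∈ Z, fderiv ℝ σ x ≠ 0

open Filter Topology

section

variable {d : ℕ}

local notation "E" => EuclideanSpace ℝ (Fin d)

variable {f g σ v : EuclideanSpace ℝ (Fin d) → ℝ} {x : EuclideanSpace ℝ (Fin d)}
  {U V W Z : Set (EuclideanSpace ℝ (Fin d))}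

noncomputable def partialDeriv (i : Fin d) (f : E → ℝ) (x : E) : ℝ :=
  fderiv ℝ f x (EuclideanSpace.single i 1)

theorem flatLaplacian_eq_sum_partialDeriv :
    flatLaplacian f x = ∑ i, partialDeriv i (partialDeriv i f) x := rfl

theorem gradient_apply_eq_partialDeriv (i : Fin d) : gradient f x i = partialDeriv i f x := by
  rw [partialDeriv, ← inner_gradient_left, EuclideanSpace.inner_single_right]
  simp

theorem inner_gradient_eq_sum :
    ⟪gradient f x, gradient g x⟫ = ∑ i, partialDeriv i f x * partialDeriv i g x := by
  rw [PiLp.inner_apply]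
  exact Finset.sum_congr rfl fun i _ => by simp [gradient_apply_eq_partialDeriv, mul_comm]

theorem partialDeriv_congr (i : Fin d) (h : f =ᶠ[𝓝 x] g) :
    partialDeriv i f x = partialDeriv i g x := by
  rw [partialDeriv, h.fderiv_eq, partialDeriv]

theorem partialDeriv_fun_add (i : Fin d) (hf : DifferentiableAt ℝ f x)
    (hg : DifferentiableAt ℝ g x) :
    partialDeriv i (fun y => f y + g y) x = partialDeriv i f x + partialDeriv i g x := by
  simp [partialDeriv, fderiv_fun_add hf hg]

theorem partialDeriv_fun_mul (i : Fin d) (hf : DifferentiableAt ℝ f x)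
    (hg : DifferentiableAt ℝ g x) :
    partialDeriv i (fun y => f y * g y) x
      = f x * partialDeriv i g x + g x * partialDeriv i f x := by
  simp [partialDeriv, fderiv_fun_mul hf hg]

theorem ContDiffAt.differentiableAt_partialDeriv (i : Fin d) (hf : ContDiffAt ℝ 2 f x) :
    DifferentiableAt ℝ (partialDeriv i f) x :=
  ((hf.fderiv_right (m := 1) (by norm_num)).differentiableAt one_ne_zero).clm_apply
    (differentiableAt_const _)

theorem ContDiffAt.eventually_differentiableAt (hf : ContDiffAt ℝ 2 f x) :
    ∀ᶠ y in 𝓝 x, DifferentiableAt ℝ f y :=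
  (hf.eventually (by simp)).mono fun _ hy => hy.differentiableAt (by norm_num)

theorem gradient_fun_add (hf : DifferentiableAt ℝ f x) (hg : DifferentiableAt ℝ g x) :
    gradient (fun y => f y + g y) x = gradient f x + gradient g x := by
  simp [gradient, fderiv_fun_add hf hg]

theorem gradient_fun_mul (hf : DifferentiableAt ℝ f x) (hg : DifferentiableAt ℝ g x) :
    gradient (fun y => f y * g y) x = f x • gradient g x + g x • gradient f x := by
  simp [gradient, fderiv_fun_mul hf hg]

theorem gradient_const_mul (c : ℝ) (hf : DifferentiableAt ℝ f x) :
    gradient (fun y => c * f y) x = c • gradient f x := by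
  simp [gradient, fderiv_const_mul hf]

theorem gradient_fun_pow (n : ℕ) (hf : DifferentiableAt ℝ f x) :
    gradient (fun y => f y ^ n) x = (n * f x ^ (n - 1)) • gradient f x := by
  simp [gradient, fderiv_fun_pow n hf]

theorem flatLaplacian_fun_add (hf : ContDiffAt ℝ 2 f x) (hg : ContDiffAt ℝ 2 g x) :
    flatLaplacian (fun y => f y + g y) x = flatLaplacian f x + flatLaplacian g x := by
  simp only [flatLaplacian_eq_sum_partialDeriv, ← Finset.sum_add_distrib]
  refine Finset.sum_congr rfl fun i _ => ?_
  have hsum : partialDeriv i (fun y => f y + g y)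
      =ᶠ[𝓝 x] fun y => partialDeriv i f y + partialDeriv i g y := by
    filter_upwards [hf.eventually_differentiableAt, hg.eventually_differentiableAt]
      with y hfy hgy using partialDeriv_fun_add i hfy hgy
  rw [partialDeriv_congr i hsum, partialDeriv_fun_add i (hf.differentiableAt_partialDeriv i)
    (hg.differentiableAt_partialDeriv i)]

theorem flatLaplacian_fun_mul (hf : ContDiffAt ℝ 2 f x) (hg : ContDiffAt ℝ 2 g x) :
    flatLaplacian (fun y => f y * g y) x
      = f x * flatLaplacian g x + 2 * ⟪gradient f x, gradient g x⟫
        + g x * flatLaplacian f x := by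
  have hf' := hf.differentiableAt (by norm_num)
  have hg' := hg.differentiableAt (by norm_num)
  simp only [flatLaplacian_eq_sum_partialDeriv, inner_gradient_eq_sum, Finset.mul_sum,
    ← Finset.sum_add_distrib]
  refine Finset.sum_congr rfl fun i _ => ?_
  have hprod : partialDeriv i (fun y => f y * g y)
      =ᶠ[𝓝 x] fun y => f y * partialDeriv i g y + g y * partialDeriv i f y := by
    filter_upwards [hf.eventually_differentiableAt, hg.eventually_differentiableAt]
      with y hfy hgy using partialDeriv_fun_mul i hfy hgy
  have hfi := hf.differentiableAt_partialDeriv i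
  have hgi := hg.differentiableAt_partialDeriv i
  rw [partialDeriv_congr i hprod, partialDeriv_fun_add i (hf'.fun_mul hgi) (hg'.fun_mul hfi),
    partialDeriv_fun_mul i hf' hgi, partialDeriv_fun_mul i hg' hfi]
  ring

theorem flatLaplacian_const (c : ℝ) : flatLaplacian (fun _ => c) x = 0 := by
  simp [flatLaplacian]

theorem flatLaplacian_const_mul (c : ℝ) (hf : ContDiffAt ℝ 2 f x) :
    flatLaplacian (fun y => c * f y) x = c * flatLaplacian f x := by
  simp [flatLaplacian_fun_mul contDiffAt_const hf, flatLaplacian_const]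

theorem flatLaplacian_fun_pow (hf : ContDiffAt ℝ 2 f x) (n : ℕ) :
    flatLaplacian (fun y => f y ^ n) x
      = n * f x ^ (n - 1) * flatLaplacian f x
        + n * (n - 1) * f x ^ (n - 2) * ‖gradient f x‖ ^ 2 := by
  induction n with
  | zero => simp [flatLaplacian_const]
  | succ n ih =>
    have hpow : flatLaplacian (fun y => f y ^ (n + 1)) x
        = flatLaplacian (fun y => f y ^ n * f y) x := by simp only [pow_succ]
    rw [hpow, flatLaplacian_fun_mul (hf.pow n) hf, ih,
      gradient_fun_pow n (hf.differentiableAt (by norm_num)), real_inner_smul_left,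
      real_inner_self_eq_norm_sq]
    rcases n with _ | _ | n
    · simp
    · norm_num
      ring
    · simp only [Nat.add_sub_cancel, show n + 1 + 1 + 1 - 2 = n + 1 by omega,
        show n + 1 + 1 - 2 = n by omega]
      push_cast
      ring

theorem ContDiffOn.partialDeriv (hV : IsOpen V) (hf : ContDiffOn ℝ (⊤ : ℕ∞) f V)
    (i : Fin d) : ContDiffOn ℝ (⊤ : ℕ∞) (partialDeriv i f) V :=
  (hf.fderiv_of_isOpen hV (by simp)).clm_apply contDiffOn_const

theorem ContDiffOn.flatLaplacian (hV : IsOpen V) (hf : ContDiffOn ℝ (⊤ : ℕ∞) f V) :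
    ContDiffOn ℝ (⊤ : ℕ∞) (flatLaplacian f) V :=
  ContDiffOn.sum fun i _ => ((hf.partialDeriv hV i).partialDeriv hV i)

theorem ContDiffOn.gradient (hV : IsOpen V) (hf : ContDiffOn ℝ (⊤ : ℕ∞) f V) :
    ContDiffOn ℝ (⊤ : ℕ∞) (gradient f) V :=
  (InnerProductSpace.toDual ℝ _).symm.toContinuousLinearEquiv.contDiff.comp_contDiffOn
    (hf.fderiv_of_isOpen hV (by simp))

theorem ContDiffOn.inner_gradient (hV : IsOpen V) (hf : ContDiffOn ℝ (⊤ : ℕ∞) f V)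
    (hg : ContDiffOn ℝ (⊤ : ℕ∞) g V) :
    ContDiffOn ℝ (⊤ : ℕ∞) (fun x => ⟪_root_.gradient f x, _root_.gradient g x⟫) V :=
  (hf.gradient hV).inner ℝ (hg.gradient hV)

theorem ContDiffOn.contDiffAt_two (hV : IsOpen V) (hf : ContDiffOn ℝ (⊤ : ℕ∞) f V)
    (hx : x ∈ V) : ContDiffAt ℝ 2 f x :=
  (hf.contDiffAt (hV.mem_nhds hx)).of_le (by norm_cast)

theorem IsDefiningFn.mono (h : IsDefiningFn σ V Z) (hWV : W ⊆ V) (hZW : Z ⊆ W) :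
    IsDefiningFn σ W Z := by
  obtain ⟨hσ, hZ, hdσ⟩ := h
  refine ⟨hσ.mono hWV, ?_, hdσ⟩
  ext x
  constructor
  · intro hx
    exact ⟨hZW hx, (hZ ▸ hx).2⟩
  · rintro ⟨hxW, hx0⟩
    exact hZ ▸ ⟨hWV hxW, hx0⟩

theorem IsDefiningFn.mul (h : IsDefiningFn σ V Z) (hV : IsOpen V)
    (hv : ContDiffOn ℝ (⊤ : ℕ∞) v V) (hv0 : ∀ x ∈ V, v x ≠ 0) :
    IsDefiningFn (fun x => σ x * v x) V Z := by
  obtain ⟨hσ, hZ, hdσ⟩ := h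
  refine ⟨hσ.mul hv, ?_, fun x hx => ?_⟩
  · simp only [hZ, mul_eq_zero]
    ext x
    constructor
    · rintro ⟨hxV, hx0⟩
      exact ⟨hxV, Or.inl hx0⟩
    · rintro ⟨hxV, hx0 | hx0⟩
      exacts [⟨hxV, hx0⟩, absurd hx0 (hv0 x hxV)]
  · rw [hZ] at hx
    obtain ⟨hxV, hx0⟩ := hx
    rw [fderiv_fun_mul ((hσ.contDiffAt_two hV hxV).differentiableAt (by norm_num))
      ((hv.contDiffAt_two hV hxV).differentiableAt (by norm_num)), hx0, zero_smul, zero_add]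
    exact smul_ne_zero (hv0 x hxV) (hdσ x (hZ ▸ ⟨hxV, hx0⟩))

theorem scurv_fun_add (hσ : ContDiffAt ℝ 2 σ x) (hg : ContDiffAt ℝ 2 g x) :
    Scurv (fun y => σ y + g y) x
      = Scurv σ x + 2 * ⟪gradient σ x, gradient g x⟫ + ‖gradient g x‖ ^ 2
        - 2 / d * (σ x * flatLaplacian g x + g x * flatLaplacian σ x
          + g x * flatLaplacian g x) := by
  rw [Scurv, Scurv, gradient_fun_add (hσ.differentiableAt (by norm_num))
    (hg.differentiableAt (by norm_num)), flatLaplacian_fun_add hσ hg, norm_add_sq_real]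
  ring

theorem gradient_const_mul_pow_add_two_mul (c : ℝ) (m : ℕ) (hσ : DifferentiableAt ℝ σ x)
    (hf : DifferentiableAt ℝ f x) :
    gradient (fun y => c * (σ y ^ (m + 2) * f y)) x
      = (c * (m + 2) * σ x ^ (m + 1) * f x) • gradient σ x
        + (c * σ x ^ (m + 2)) • gradient f x := by
  rw [gradient_const_mul c ((hσ.fun_pow _).fun_mul hf), gradient_fun_mul (hσ.fun_pow _) hf,
    gradient_fun_pow _ hσ]
  push_cast
  module

theorem flatLaplacian_const_mul_pow_add_two_mul (c : ℝ) (m : ℕ) (hσ : ContDiffAt ℝ 2 σ x)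
    (hf : ContDiffAt ℝ 2 f x) :
    flatLaplacian (fun y => c * (σ y ^ (m + 2) * f y)) x
      = c * (σ x ^ (m + 2) * flatLaplacian f x
        + 2 * (m + 2) * σ x ^ (m + 1) * ⟪gradient σ x, gradient f x⟫
        + f x * ((m + 2) * σ x ^ (m + 1) * flatLaplacian σ x
          + (m + 2) * (m + 1) * σ x ^ m * ‖gradient σ x‖ ^ 2)) := by
  rw [flatLaplacian_const_mul c ((hσ.pow _).mul hf), flatLaplacian_fun_mul (hσ.pow _) hf,
    flatLaplacian_fun_pow hσ, gradient_fun_pow _ (hσ.differentiableAt (by norm_num)),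
    real_inner_smul_left]
  simp only [show m + 2 - 1 = m + 1 by omega, show m + 2 - 2 = m by omega]
  push_cast
  ring

theorem ContDiffOn.norm_gradient_sq (hV : IsOpen V) (hf : ContDiffOn ℝ (⊤ : ℕ∞) f V) :
    ContDiffOn ℝ (⊤ : ℕ∞) (fun x => ‖_root_.gradient f x‖ ^ 2) V := by
  simpa only [real_inner_self_eq_norm_sq] using hf.inner_gradient hV hf

theorem exists_scurv_add_const_mul_pow_mul {m : ℕ} (hV : IsOpen V)
    (hσ : ContDiffOn ℝ (⊤ : ℕ∞) σ V) (hf : ContDiffOn ℝ (⊤ : ℕ∞) f V)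
    (hS : ∀ x ∈ V, Scurv σ x = 1 + σ x ^ (m + 1) * f x) (c : ℝ) :
    ∃ R : E → ℝ, ContDiffOn ℝ (⊤ : ℕ∞) R V ∧ ∀ x ∈ V,
      Scurv (fun y => σ y + c * (σ y ^ (m + 2) * f y)) x
        = 1 + (1 + 2 * c * (m + 2) * (1 - (m + 1) / d)) * σ x ^ (m + 1) * f x
          + σ x ^ (m + 2) * R x := by
  set g := fun y => c * (σ y ^ (m + 2) * f y)
  have hg : ContDiffOn ℝ (⊤ : ℕ∞) g V := contDiffOn_const.mul ((hσ.pow _).mul hf)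
  set n : ℝ := m + 2
  -- `R` collects the terms of `scurv_fun_add σ g` that carry at least `σ ^ (m + 2)`.
  refine ⟨fun x => 2 * c * n * (1 - (m + 1) / d) * f x
        * (σ x ^ m * f x + 2 / d * flatLaplacian σ x)
      + 2 * c * ⟪gradient σ x, gradient f x⟫
      + c ^ 2 * (n ^ 2 * σ x ^ m * f x ^ 2 * ‖gradient σ x‖ ^ 2
        + 2 * n * σ x ^ (m + 1) * f x * ⟪gradient σ x, gradient f x⟫
        + σ x ^ (m + 2) * ‖gradient f x‖ ^ 2)
      - 2 * c / d * (σ x * flatLaplacian f x + 2 * n * ⟪gradient σ x, gradient f x⟫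
        + (n + 1) * f x * flatLaplacian σ x + f x * flatLaplacian g x), ?_, fun x hx => ?_⟩
  · have := hσ.norm_gradient_sq hV
    have := hf.norm_gradient_sq hV
    have := hσ.inner_gradient hV hf
    have := hσ.flatLaplacian hV
    have := hf.flatLaplacian hV
    have := hg.flatLaplacian hV
    fun_prop
  · have hσx := hσ.contDiffAt_two hV hx
    have hfx := hf.contDiffAt_two hV hx
    have hgrad := gradient_const_mul_pow_add_two_mul c m (hσx.differentiableAt (by norm_num))
      (hfx.differentiableAt (by norm_num))
    have hlap := flatLaplacian_const_mul_pow_add_two_mul c m hσx hfx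
    have hS' := hS x hx
    rw [Scurv] at hS'
    rw [scurv_fun_add hσx (hg.contDiffAt_two hV hx), hS x hx,
      ← real_inner_self_eq_norm_sq (gradient g x), hgrad]
    simp only [inner_add_left, inner_add_right, inner_smul_left, inner_smul_right,
      real_inner_self_eq_norm_sq, real_inner_comm (gradient σ x), conj_trivial]
    linear_combination (2 * c * n * (1 - (m + 1) / d) * σ x ^ (m + 1) * f x) * hS'
      - 2 / d * σ x * hlap

def SingularYamabeSolvableToOrder (k : ℕ) (U Z : Set E) : Prop :=
  ∃ (V : Set E) (σ B : E → ℝ),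
    IsOpen V ∧ Z ⊆ V ∧ V ⊆ U ∧ IsDefiningFn σ V Z ∧
      ContDiffOn ℝ (⊤ : ℕ∞) B V ∧ ∀ x ∈ V, Scurv σ x = 1 + σ x ^ k * B x

theorem singularYamabeSolvableToOrder_one (hU : IsOpen U)
    {σ₀ : E → ℝ} (h₀ : IsDefiningFn σ₀ U Z) :
    SingularYamabeSolvableToOrder 1 U Z := by
  obtain ⟨hσ₀, hZ, hdσ₀⟩ := h₀
  have hgrad := hσ₀.gradient hU
  set V := U ∩ gradient σ₀ ⁻¹' {0}ᶜ
  have hV : IsOpen V := hgrad.continuousOn.isOpen_inter_preimage hU isOpen_compl_singleton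
  have hVU : V ⊆ U := Set.inter_subset_left
  have hZV : Z ⊆ V := fun x hx => ⟨(hZ ▸ hx).1, fun h0 => hdσ₀ x hx <| by
    rw [← toDual_gradient, show gradient σ₀ x = 0 from h0, map_zero]⟩
  have hσ₀V := hσ₀.mono hVU
  set φ := fun x => ‖gradient σ₀ x‖⁻¹
  have hN : ContDiffOn ℝ (⊤ : ℕ∞) (fun x => ‖gradient σ₀ x‖) V :=
    (hgrad.mono hVU).norm ℝ fun x hx => hx.2
  have hφ : ContDiffOn ℝ (⊤ : ℕ∞) φ V := hN.inv fun x hx => norm_ne_zero_iff.2 hx.2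
  set σ₁ := fun x => σ₀ x * φ x
  refine ⟨V, σ₁, fun x => σ₀ x * ‖gradient σ₀ x‖ * ‖gradient φ x‖ ^ 2
      + 2 * ⟪gradient φ x, gradient σ₀ x⟫ - 2 / d * flatLaplacian σ₁ x,
    hV, hZV, hVU, (IsDefiningFn.mono ⟨hσ₀, hZ, hdσ₀⟩ hVU hZV).mul hV hφ
      fun x hx => inv_ne_zero (norm_ne_zero_iff.2 hx.2), ?_, fun x hx => ?_⟩
  · have hnormφ := hφ.norm_gradient_sq hV
    exact (((hσ₀V.mul hN).mul hnormφ).add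
      (contDiffOn_const.mul (hφ.inner_gradient hV hσ₀V))).sub
        (contDiffOn_const.mul ((hσ₀V.mul hφ).flatLaplacian hV))
  · have hφN : φ x * ‖gradient σ₀ x‖ = 1 := inv_mul_cancel₀ (norm_ne_zero_iff.2 hx.2)
    rw [Scurv, gradient_fun_mul ((hσ₀V.contDiffAt_two hV hx).differentiableAt (by norm_num))
      ((hφ.contDiffAt_two hV hx).differentiableAt (by norm_num)), norm_add_sq_real,
      norm_smul, norm_smul, inner_smul_left, inner_smul_right]
    simp only [Real.norm_eq_abs, mul_pow, sq_abs, conj_trivial]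
    linear_combination (φ x * ‖gradient σ₀ x‖ + 1 - σ₀ x ^ 2 * ‖gradient φ x‖ ^ 2) * hφN

theorem SingularYamabeSolvableToOrder.succ {m : ℕ} (hmd : m + 1 < d)
    (h : SingularYamabeSolvableToOrder (m + 1) U Z) :
    SingularYamabeSolvableToOrder (m + 2) U Z := by
  obtain ⟨V, σ, f, hV, hZV, hVU, hσdef, hf, hS⟩ := h
  -- The `σ ^ (m + 1)` coefficient can be killed only while `m + 1 ≠ d`: this is the order-`d`
  -- obstruction.
  set c : ℝ := -d / (2 * (m + 2) * (d - (m + 1))) with hc_def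
  have hc : 1 + 2 * c * (m + 2) * (1 - (m + 1) / d) = 0 := by
    have hdm : (d : ℝ) - (m + 1) ≠ 0 := sub_ne_zero.2 (by exact_mod_cast hmd.ne')
    have hd : (d : ℝ) ≠ 0 := Nat.cast_ne_zero.2 (by omega)
    rw [hc_def]
    field_simp
    ring
  obtain ⟨R, hR, hSR⟩ := exists_scurv_add_const_mul_pow_mul hV hσdef.1 hf hS c
  set v := fun x => 1 + c * σ x ^ (m + 1) * f x
  have hv : ContDiffOn ℝ (⊤ : ℕ∞) v V :=
    contDiffOn_const.add ((contDiffOn_const.mul (hσdef.1.pow _)).mul hf)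
  set W := V ∩ v ⁻¹' {0}ᶜ
  have hW : IsOpen W := hv.continuousOn.isOpen_inter_preimage hV isOpen_compl_singleton
  have hWV : W ⊆ V := Set.inter_subset_left
  have hZW : Z ⊆ W := fun x hx => ⟨hZV hx, by
    have hx0 : σ x = 0 := (hσdef.2.1 ▸ hx).2
    simp [v, hx0]⟩
  have hfactor : (fun y => σ y + c * (σ y ^ (m + 2) * f y)) = fun y => σ y * v y := by
    funext y
    ring
  refine ⟨W, fun y => σ y * v y, fun x => R x / v x ^ (m + 2), hW, hZW, hWV.trans hVU,
    (hσdef.mono hWV hZW).mul hW (hv.mono hWV) fun x hx => hx.2,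
    (hR.mono hWV).div ((hv.mono hWV).pow _) fun x hx => pow_ne_zero _ hx.2, fun x hx => ?_⟩
  have hvx : v x ^ (m + 2) ≠ 0 := pow_ne_zero _ hx.2
  show Scurv (fun y => σ y * v y) x = 1 + (σ x * v x) ^ (m + 2) * (R x / v x ^ (m + 2))
  rw [← hfactor, hSR x (hWV hx), hc, mul_pow]
  field_simp
  ring

theorem singularYamabeSolvableToOrder_of_le (hU : IsOpen U)
    {σ₀ : E → ℝ} (h₀ : IsDefiningFn σ₀ U Z) {k : ℕ} (hk : 1 ≤ k)
    (hkd : k ≤ d) : SingularYamabeSolvableToOrder k U Z := by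
  induction k, hk using Nat.le_induction with
  | base => exact singularYamabeSolvableToOrder_one hU h₀
  | succ k hk ih =>
    obtain ⟨m, rfl⟩ : ∃ m, k = m + 1 := ⟨k - 1, by omega⟩
    exact (ih (by omega)).succ hkd

end

/-- every hypersurface `Σ` with a smooth defining function admits, on some
neighbourhood `V` of `Σ`, a defining function `σ` solving the singular Yamabe equation up
to an order-`d` obstruction term: `S(σ) = 1 + σ^d · B` with `B` smooth. -/
theorem statement1 (d : ℕ) (hd : 3 ≤ d)
    (U Z : Set (EuclideanSpace ℝ (Fin d))) (hU : IsOpen U)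
    (σ₀ : EuclideanSpace ℝ (Fin d) → ℝ) (h₀ : IsDefiningFn σ₀ U Z) :
    ∃ (V : Set (EuclideanSpace ℝ (Fin d))) (σ B : EuclideanSpace ℝ (Fin d) → ℝ),
      IsOpen V ∧ Z ⊆ V ∧ V ⊆ U ∧
      IsDefiningFn σ V Z ∧ ContDiffOn ℝ (⊤ : ℕ∞) B V ∧
      ∀ x ∈ V, Scurv σ x = 1 + σ x ^ d * B x :=
  singularYamabeSolvableToOrder_of_le hU h₀ (by omega) le_rfl
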